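/- arXiv:2502.07913 — 4 statements merged into one kernel-verified Lean document; each statement's English description precedes it below -/
import Mathlib

section
/- In M₂(ℂ), a nonzero rank-one matrix B satisfies: E₁₁ ⊥ B and every matrix X with E₁₁ ⊥ X and B ⊥ X has rank at most one, if and only if B is a nonzero scalar multiple of E₁₂ or of E₂₁. -/
open Matrix

/-- The operator (spectral) norm of a complex matrix, induced by the Euclidean norm on `ℂⁿ`. -/
noncomputable def opNorm {n : ℕ} (A : Matrix (Fin n) (Fin n) ℂ) : ℝ :=
  ‖Matrix.toEuclideanCLM (𝕜 := ℂ) (n := Fin n) A‖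

/-- Birkhoff–James orthogonality of matrices with respect to the operator norm. -/
def BJ {n : ℕ} (A B : Matrix (Fin n) (Fin n) ℂ) : Prop :=
  ∀ c : ℂ, opNorm A ≤ opNorm (A + c • B)

/-!
A rank-one matrix `R = u v*` has operator norm `‖u‖ ‖v‖`, which is also the norm of its vector of
entries in `EuclideanSpace ℂ (Fin n × Fin n)` (its Hilbert–Schmidt norm), and the Hilbert–Schmidt
norm dominates the operator norm. So `R ⊥ X` for the operator norm iff `R ⊥ X` for the
Hilbert–Schmidt norm, and in an inner-product norm Birkhoff–James orthogonality is plain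
orthogonality: `R ⊥ X ↔ ∑ conj (R i j) * X i j = u* X v = 0`.

In `M₂(ℂ)` both conditions are therefore linear in `X`, and `E₁₁ ⊥ X` just says `X 0 0 = 0`.
A rank-one `B` with `B 0 0 = 0` has `B 0 1 * B 1 0 = 0`. If moreover `B 1 1 ≠ 0`, then
`X = !![0, 1; 1, -(conj (B 0 1) + conj (B 1 0)) / conj (B 1 1)]` is orthogonal to `E₁₁` and `B`
but has determinant `-1`; so `B` is a multiple of `E₁₂` or `E₂₁`. Conversely for `B = c E₁₂`
(or `c E₂₁`) the two conditions kill the first row (column) of `X`, hence `det X = 0`.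
-/

open scoped InnerProductSpace

theorem exists_norm_add_smul_lt_of_inner_ne_zero {𝕜 E : Type*} [RCLike 𝕜] [NormedAddCommGroup E]
    [InnerProductSpace 𝕜 E] {x y : E} (h : ⟪x, y⟫_𝕜 ≠ 0) : ∃ c : 𝕜, ‖x + c • y‖ < ‖x‖ := by
  have hy : y ≠ 0 := by rintro rfl; simp at h
  have hy2 : 0 < ‖y‖ ^ 2 := by positivity
  refine ⟨-(⟪y, x⟫_𝕜 / (‖y‖ ^ 2 : ℝ)), ?_⟩
  have hsq : ‖x + -(⟪y, x⟫_𝕜 / (‖y‖ ^ 2 : ℝ)) • y‖ ^ 2 = ‖x‖ ^ 2 - ‖⟪x, y⟫_𝕜‖ ^ 2 / ‖y‖ ^ 2 := by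
    rw [norm_add_sq (𝕜 := 𝕜), inner_smul_right, norm_smul, norm_neg, norm_div, ← inner_conj_symm,
      RCLike.norm_conj, RCLike.norm_ofReal, neg_mul, div_mul_eq_mul_div, RCLike.conj_mul,
      ← RCLike.ofReal_pow, ← RCLike.ofReal_div, map_neg, RCLike.ofReal_re, abs_of_pos hy2]
    field_simp
    ring
  have : 0 < ‖⟪x, y⟫_𝕜‖ ^ 2 / ‖y‖ ^ 2 := by positivity
  exact lt_of_pow_lt_pow_left₀ 2 (norm_nonneg _) (by linarith)

section HilbertSchmidt

variable {𝕜 : Type*} [RCLike 𝕜] {m n : Type*}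

variable (𝕜 m n) in
/-- The entries of a matrix as a vector of `EuclideanSpace`, whose norm is the Hilbert–Schmidt
(Frobenius) norm. -/
noncomputable def hilbertSchmidt : Matrix m n 𝕜 →ₗ[𝕜] EuclideanSpace 𝕜 (m × n) :=
  (WithLp.linearEquiv 2 𝕜 (m × n → 𝕜)).symm.toLinearMap ∘ₗ
    (LinearEquiv.curry 𝕜 𝕜 m n).symm.toLinearMap

@[simp] lemma hilbertSchmidt_apply (A : Matrix m n 𝕜) (p : m × n) :
    hilbertSchmidt 𝕜 m n A p = A p.1 p.2 := rfl

variable [Fintype m] [Fintype n]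

lemma inner_hilbertSchmidt (A B : Matrix m n 𝕜) :
    ⟪hilbertSchmidt 𝕜 m n A, hilbertSchmidt 𝕜 m n B⟫_𝕜 = ∑ i, ∑ j, star (A i j) * B i j := by
  simp [PiLp.inner_apply, Fintype.sum_prod_type, mul_comm]

lemma norm_hilbertSchmidt_vecMulVec (u : EuclideanSpace 𝕜 m) (v : EuclideanSpace 𝕜 n) :
    ‖hilbertSchmidt 𝕜 m n (vecMulVec u (star v))‖ = ‖u‖ * ‖v‖ := by
  rw [← sq_eq_sq₀ (norm_nonneg _) (by positivity), mul_pow, EuclideanSpace.norm_sq_eq,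
    EuclideanSpace.norm_sq_eq, EuclideanSpace.norm_sq_eq, Finset.sum_mul_sum]
  simp [Fintype.sum_prod_type, vecMulVec_apply, mul_pow]

lemma inner_hilbertSchmidt_vecMulVec [DecidableEq n] (u v : EuclideanSpace 𝕜 n) (A : Matrix n n 𝕜) :
    ⟪hilbertSchmidt 𝕜 n n (vecMulVec u (star v)), hilbertSchmidt 𝕜 n n A⟫_𝕜 =
      ⟪u, toEuclideanCLM (𝕜 := 𝕜) (n := n) A v⟫_𝕜 := by
  rw [inner_hilbertSchmidt]
  simp [EuclideanSpace.inner_eq_star_dotProduct, vecMulVec_apply, mulVec, dotProduct,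
    Finset.sum_mul]
  exact Finset.sum_congr rfl fun i _ ↦ Finset.sum_congr rfl fun j _ ↦ by ring

end HilbertSchmidt

section OperatorNorm

variable {n : ℕ}

lemma toEuclideanCLM_vecMulVec (u v : EuclideanSpace ℂ (Fin n)) :
    toEuclideanCLM (𝕜 := ℂ) (n := Fin n) (vecMulVec u (star v)) =
      InnerProductSpace.rankOne ℂ u v := by
  apply ContinuousLinearMap.coe_injective
  rw [coe_toEuclideanCLM_eq_toEuclideanLin, ← InnerProductSpace.symm_toEuclideanLin_rankOne,
    LinearEquiv.apply_symm_apply]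

lemma opNorm_vecMulVec (u v : EuclideanSpace ℂ (Fin n)) :
    opNorm (vecMulVec u (star v)) = ‖u‖ * ‖v‖ := by
  rw [opNorm, toEuclideanCLM_vecMulVec, InnerProductSpace.norm_rankOne]

lemma opNorm_le_norm_hilbertSchmidt (A : Matrix (Fin n) (Fin n) ℂ) :
    opNorm A ≤ ‖hilbertSchmidt ℂ _ _ A‖ := by
  refine ContinuousLinearMap.opNorm_le_bound _ (norm_nonneg _) fun x ↦ ?_
  set y := toEuclideanCLM (𝕜 := ℂ) (n := Fin n) A x
  have : ‖y‖ * ‖y‖ ≤ ‖y‖ * (‖hilbertSchmidt ℂ _ _ A‖ * ‖x‖) := calc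
    ‖y‖ * ‖y‖ = ‖⟪y, y⟫_ℂ‖ := by
      rw [inner_self_eq_norm_sq_to_K, norm_pow, RCLike.norm_ofReal, abs_norm, sq]
    _ = ‖⟪hilbertSchmidt ℂ _ _ (vecMulVec y (star x)), hilbertSchmidt ℂ _ _ A⟫_ℂ‖ := by
      rw [inner_hilbertSchmidt_vecMulVec]
    _ ≤ ‖hilbertSchmidt ℂ _ _ (vecMulVec y (star x))‖ * ‖hilbertSchmidt ℂ _ _ A‖ :=
      norm_inner_le_norm _ _
    _ = ‖y‖ * (‖hilbertSchmidt ℂ _ _ A‖ * ‖x‖) := by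
      rw [norm_hilbertSchmidt_vecMulVec]; ring
  rcases (norm_nonneg y).eq_or_lt with hy | hy
  · rw [← hy]; positivity
  · exact le_of_mul_le_mul_left this hy

theorem BJ_vecMulVec_iff (u v : EuclideanSpace ℂ (Fin n)) (X : Matrix (Fin n) (Fin n) ℂ) :
    BJ (vecMulVec u (star v)) X ↔ ⟪u, toEuclideanCLM (𝕜 := ℂ) (n := Fin n) X v⟫_ℂ = 0 := by
  constructor
  · intro hBJ
    by_contra h
    rw [← inner_hilbertSchmidt_vecMulVec] at h
    obtain ⟨c, hc⟩ := exists_norm_add_smul_lt_of_inner_ne_zero h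
    have hle := hBJ c
    rw [opNorm_vecMulVec, ← norm_hilbertSchmidt_vecMulVec] at hle
    have hHS := opNorm_le_norm_hilbertSchmidt (vecMulVec u (star v) + c • X)
    rw [map_add, map_smul] at hHS
    linarith
  · intro h c
    have key : ⟪u, toEuclideanCLM (𝕜 := ℂ) (n := Fin n) (vecMulVec u (star v) + c • X) v⟫_ℂ =
        ((‖u‖ * ‖v‖ : ℝ) : ℂ) ^ 2 := by
      rw [map_add, map_smul, _root_.add_apply, _root_.smul_apply,
        inner_add_right, inner_smul_right, h, toEuclideanCLM_vecMulVec,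
        InnerProductSpace.rankOne_apply, inner_smul_right, inner_self_eq_norm_sq_to_K,
        inner_self_eq_norm_sq_to_K, RCLike.ofReal_eq_complex_ofReal]
      push_cast
      ring
    set T := toEuclideanCLM (𝕜 := ℂ) (n := Fin n) (vecMulVec u (star v) + c • X)
    have hCS := (norm_inner_le_norm (𝕜 := ℂ) u (T v)).trans
      (mul_le_mul_of_nonneg_left (T.le_opNorm v) (norm_nonneg u))
    rw [key, norm_pow, Complex.norm_real, Real.norm_of_nonneg (by positivity)] at hCS
    replace hCS : (‖u‖ * ‖v‖) * (‖u‖ * ‖v‖) ≤ (‖u‖ * ‖v‖) * ‖T‖ := by linarith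
    rw [opNorm_vecMulVec]
    change ‖u‖ * ‖v‖ ≤ ‖T‖
    rcases (mul_nonneg (norm_nonneg u) (norm_nonneg v)).eq_or_lt with huv | huv
    · rw [← huv]; positivity
    · exact le_of_mul_le_mul_left hCS huv

end OperatorNorm

theorem Matrix.exists_eq_vecMulVec_of_rank_le_one {K m n : Type*} [Field K]
    [Fintype n] (A : Matrix m n K) (h : A.rank ≤ 1) : ∃ u v, A = vecMulVec u v := by
  have : Module.Finite K (Submodule.span K (Set.range A.col)) :=
    FiniteDimensional.span_of_finite K (Set.finite_range _)
  rw [rank_eq_finrank_span_cols, finrank_le_one_iff] at h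
  obtain ⟨u, hu⟩ := h
  choose v hv using fun j ↦ hu ⟨A.col j, Submodule.subset_span ⟨j, rfl⟩⟩
  refine ⟨u, v, ext fun i j ↦ ?_⟩
  have := congr_arg (fun w : Submodule.span K (Set.range A.col) ↦ (w : m → K) i) (hv j)
  simp only [SetLike.val_smul, Pi.smul_apply, smul_eq_mul, col_apply] at this
  rw [vecMulVec_apply, ← this, mul_comm]

theorem Matrix.rank_lt_card_iff_det_eq_zero {K n : Type*} [Field K] [Fintype n] [DecidableEq n]
    (A : Matrix n n K) : A.rank < Fintype.card n ↔ A.det = 0 := by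
  refine ⟨fun h ↦ by_contra fun hA ↦ h.ne (rank_of_det_ne_zero hA), fun hA ↦ ?_⟩
  obtain ⟨v, hv, hAv⟩ := exists_mulVec_eq_zero_iff.mpr hA
  have hker : 0 < Module.finrank K (LinearMap.ker A.mulVecLin) :=
    Module.finrank_pos_iff_exists_ne_zero.mpr ⟨⟨v, hAv⟩, fun h0 ↦ hv (congr_arg Subtype.val h0)⟩
  have := LinearMap.finrank_range_add_finrank_ker A.mulVecLin
  rw [Module.finrank_fintype_fun_eq_card] at this
  rw [rank]
  omega

theorem Matrix.rank_le_one_iff_det_eq_zero {K : Type*} [Field K] (A : Matrix (Fin 2) (Fin 2) K) :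
    A.rank ≤ 1 ↔ A.det = 0 := by
  rw [← rank_lt_card_iff_det_eq_zero, Fintype.card_fin, Nat.lt_succ_iff]

theorem BJ_iff_inner_hilbertSchmidt_eq_zero_of_rank_le_one {n : ℕ}
    {B : Matrix (Fin n) (Fin n) ℂ} (hB : B.rank ≤ 1) (X : Matrix (Fin n) (Fin n) ℂ) :
    BJ B X ↔ ⟪hilbertSchmidt ℂ _ _ B, hilbertSchmidt ℂ _ _ X⟫_ℂ = 0 := by
  obtain ⟨u, v, rfl⟩ := B.exists_eq_vecMulVec_of_rank_le_one hB
  have := BJ_vecMulVec_iff (WithLp.toLp 2 u) (WithLp.toLp 2 (star v)) X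
  simp only [star_star] at this
  rw [this, ← inner_hilbertSchmidt_vecMulVec]
  simp only [star_star]

theorem BJ_single_iff {n : ℕ} {i j : Fin n} {c : ℂ} (hc : c ≠ 0) (X : Matrix (Fin n) (Fin n) ℂ) :
    BJ (single i j c) X ↔ X i j = 0 := by
  have hrank : (single i j c).rank ≤ 1 := by
    have : single i j c = vecMulVec (Pi.single i c) (Pi.single j 1) := by
      ext k l
      simp only [single_apply, vecMulVec_apply, Pi.single_apply]
      grind
    exact this ▸ rank_vecMulVec_le _ _
  rw [BJ_iff_inner_hilbertSchmidt_eq_zero_of_rank_le_one hrank, inner_hilbertSchmidt]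
  simp [single_apply, ite_and, apply_ite (starRingEnd ℂ), ite_mul, hc]

theorem exists_BJ_single_BJ_det_ne_zero {B : Matrix (Fin 2) (Fin 2) ℂ} (hB : B.rank ≤ 1)
    (hB00 : B 0 0 = 0) (hB11 : B 1 1 ≠ 0) :
    ∃ X : Matrix (Fin 2) (Fin 2) ℂ, BJ (single 0 0 1) X ∧ BJ B X ∧ X.det ≠ 0 := by
  refine ⟨!![0, 1; 1, -(star (B 0 1) + star (B 1 0)) / star (B 1 1)],
    (BJ_single_iff one_ne_zero _).2 rfl, ?_, by simp [det_fin_two]⟩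
  rw [BJ_iff_inner_hilbertSchmidt_eq_zero_of_rank_le_one hB, inner_hilbertSchmidt]
  have : (starRingEnd ℂ) (B 1 1) ≠ 0 := by simpa using hB11
  simp [Fin.sum_univ_two, hB00]
  field_simp
  ring

theorem exists_eq_smul_single_of_mul_eq_zero {B : Matrix (Fin 2) (Fin 2) ℂ} (hB : B ≠ 0)
    (hB00 : B 0 0 = 0) (hB11 : B 1 1 = 0) (hB01_B10 : B 0 1 * B 1 0 = 0) :
    ∃ c : ℂ, c ≠ 0 ∧ (B = c • single 0 1 1 ∨ B = c • single 1 0 1) := by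
  rcases mul_eq_zero.1 hB01_B10 with h | h
  · refine ⟨B 1 0, fun h10 ↦ hB ?_, Or.inr ?_⟩ <;> ext i j <;> fin_cases i <;> fin_cases j <;>
      simp [*]
  · refine ⟨B 0 1, fun h01 ↦ hB ?_, Or.inl ?_⟩ <;> ext i j <;> fin_cases i <;> fin_cases j <;>
      simp [*]

/-- A nonzero rank-one `B ∈ M₂(ℂ)` satisfies `E₁₁ ⊥ B` together with: every common
outgoing BJ-neighbour of `E₁₁` and `B` has rank at most one, iff `B` is a nonzero
scalar multiple of `E₁₂` or of `E₂₁`. -/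
theorem stmt9 (B : Matrix (Fin 2) (Fin 2) ℂ) (hB : B.rank = 1) :
    (BJ (Matrix.single 0 0 (1 : ℂ)) B ∧
      ∀ X : Matrix (Fin 2) (Fin 2) ℂ,
        BJ (Matrix.single 0 0 (1 : ℂ)) X → BJ B X → X.rank ≤ 1) ↔
      ∃ c : ℂ, c ≠ 0 ∧
        (B = c • Matrix.single 0 1 (1 : ℂ) ∨
          B = c • Matrix.single 1 0 (1 : ℂ)) := by
  have hE : ∀ X : Matrix (Fin 2) (Fin 2) ℂ, BJ (single 0 0 1) X ↔ X 0 0 = 0 :=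
    BJ_single_iff one_ne_zero
  constructor
  · rintro ⟨hB00, hcommon⟩
    rw [hE] at hB00
    have hB01_B10 : B 0 1 * B 1 0 = 0 := by
      have := (rank_le_one_iff_det_eq_zero B).1 hB.le
      rw [det_fin_two, hB00] at this
      linear_combination -this
    have hB11 : B 1 1 = 0 := by
      by_contra hB11
      obtain ⟨X, hEX, hBX, hX⟩ := exists_BJ_single_BJ_det_ne_zero hB.le hB00 hB11
      exact hX ((rank_le_one_iff_det_eq_zero X).1 (hcommon X hEX hBX))
    exact exists_eq_smul_single_of_mul_eq_zero (by rintro rfl; simp at hB) hB00 hB11 hB01_B10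
  · rintro ⟨c, hc, rfl | rfl⟩ <;> rw [smul_single, smul_eq_mul, mul_one] <;>
      refine ⟨(hE _).2 (by simp), fun X hX hcX ↦ ?_⟩ <;>
      simp [rank_le_one_iff_det_eq_zero, det_fin_two, (hE X).1 hX, (BJ_single_iff hc X).1 hcX]
end

section
/- Let n ≥ 2 and A ∈ Mₙ(ℂ) with singular value decomposition A = Σᵢ σᵢ xᵢ yᵢ*, σ₁ ≥ σ₂ ≥ ⋯ ≥ 0, and rk A ≥ 2. If some vector x ∈ ℂⁿ is not orthogonal to x₂, then B := x y₂* satisfies A ⊥ B but not B ⊥ A (Birkhoff–James). -/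
/-!
`A` attains its norm `σ₁` at `y₁`, and `B = v y₂*` kills `y₁`, so `(A + c B) y₁ = A y₁` and
`‖A + c B‖ ≥ ‖A‖`: this is `A ⊥ B`.

Conversely, `B` is rank one and `⟪B y₂, A y₂⟫ = σ₂ ⟪v, x₂⟫ ≠ 0`, where `σ₂ ≠ 0` because
`rk A ≥ 2`. Splitting `w = ⟪y₂, w⟫ y₂ + w'` with `w' ⊥ y₂` gives
`‖B + c A‖² ≤ ‖v + c A y₂‖² + |c|² ‖A‖²`, and for `c` a small multiple of `-conj ⟪v, A y₂⟫`
the first-order term makes this smaller than `‖v‖² = ‖B‖²`, so `B ⊥ A` fails.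
-/

open Matrix

open InnerProductSpace RCLike ComplexConjugate

lemma Real.mul_add_mul_le_sqrt_mul_sqrt (a b c d : ℝ) :
    a * b + c * d ≤ √(a ^ 2 + c ^ 2) * √(b ^ 2 + d ^ 2) := by
  simpa [Fin.sum_univ_two] using Real.sum_mul_le_sqrt_mul_sqrt Finset.univ ![a, c] ![b, d]

section OperatorNorm

variable {𝕜 E F : Type*} [RCLike 𝕜] [NormedAddCommGroup E] [InnerProductSpace 𝕜 E]
  [NormedAddCommGroup F] [InnerProductSpace 𝕜 F]

local notation "⟪" x ", " y "⟫" => inner 𝕜 x y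

theorem norm_le_norm_add_smul_of_inner_eq_zero {A B : E →L[𝕜] F} {z : E} (hz : ‖z‖ = 1)
    (hAz : ‖A‖ ≤ ‖A z‖) (h : ⟪A z, B z⟫ = 0) (c : 𝕜) : ‖A‖ ≤ ‖A + c • B‖ := by
  have hpyth := norm_add_sq_eq_norm_sq_add_norm_sq_of_inner_eq_zero (A z) (c • B z)
    (by rw [inner_smul_right, h, mul_zero])
  calc ‖A‖ ≤ ‖A z‖ := hAz
    _ ≤ ‖A z + c • B z‖ := (mul_self_le_mul_self_iff (norm_nonneg _) (norm_nonneg _)).2 <|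
        hpyth ▸ le_add_of_nonneg_right (mul_self_nonneg _)
    _ ≤ ‖A + c • B‖ := by simpa [hz] using (A + c • B).le_opNorm z

theorem norm_rankOne_add_smul_le (u : F) {y : E} (hy : ‖y‖ = 1) (A : E →L[𝕜] F) (c : 𝕜) :
    ‖rankOne 𝕜 u y + c • A‖ ≤ √(‖u + c • A y‖ ^ 2 + (‖c‖ * ‖A‖) ^ 2) := by
  refine ContinuousLinearMap.opNorm_le_bound _ (Real.sqrt_nonneg _) fun w => ?_
  set α := ⟪y, w⟫
  set w' := w - α • y
  have hyw' : ⟪y, w'⟫ = 0 := by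
    rw [inner_sub_right, inner_smul_right, inner_self_eq_norm_sq_to_K, hy]
    simp [α]
  have hw : ‖w‖ = √(‖α‖ ^ 2 + ‖w'‖ ^ 2) := by
    have hpyth := norm_add_sq_eq_norm_sq_add_norm_sq_of_inner_eq_zero (α • y) w'
      (by rw [inner_smul_left, hyw', mul_zero])
    rw [add_sub_cancel, norm_smul, hy, mul_one] at hpyth
    rw [← Real.sqrt_mul_self (norm_nonneg w), hpyth, sq, sq]
  have happly : (rankOne 𝕜 u y + c • A) w = α • (u + c • A y) + c • A w' := by
    simp [α, w', smul_sub, smul_comm c α]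
  calc ‖(rankOne 𝕜 u y + c • A) w‖ ≤ ‖α‖ * ‖u + c • A y‖ + ‖c‖ * ‖A‖ * ‖w'‖ := by
        rw [happly]
        refine (norm_add_le _ _).trans (add_le_add (norm_smul _ _).le ?_)
        rw [norm_smul, mul_assoc]
        exact mul_le_mul_of_nonneg_left (A.le_opNorm w') (norm_nonneg c)
    _ ≤ √(‖u + c • A y‖ ^ 2 + (‖c‖ * ‖A‖) ^ 2) * ‖w‖ := by
        rw [hw]
        nlinarith [Real.mul_add_mul_le_sqrt_mul_sqrt ‖u + c • A y‖ ‖α‖ (‖c‖ * ‖A‖) ‖w'‖]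

theorem exists_norm_rankOne_add_smul_lt {u : F} {y : E} (hy : ‖y‖ = 1) {A : E →L[𝕜] F}
    (h : ⟪u, A y⟫ ≠ 0) : ∃ c : 𝕜, ‖rankOne 𝕜 u y + c • A‖ < ‖rankOne 𝕜 u y‖ := by
  set r := ⟪u, A y⟫
  have hu : 0 < ‖u‖ := norm_pos_iff.2 fun hu => h (by simp [r, hu])
  have hAy : 0 < ‖A y‖ := norm_pos_iff.2 fun hAy => h (by simp [r, hAy])
  set K := ‖A y‖ ^ 2 + ‖A‖ ^ 2
  have hK : 0 < K := by positivity
  set c : 𝕜 := -((K⁻¹ : ℝ) : 𝕜) * conj r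
  have hc : ‖c‖ = K⁻¹ * ‖r‖ := by simp [c, hK.le]
  have hcross : re ⟪u, c • A y⟫ = -(K⁻¹ * ‖r‖ ^ 2) := by
    have hcr : c * r = ((-(K⁻¹ * ‖r‖ ^ 2) : ℝ) : 𝕜) := by
      rw [mul_assoc, RCLike.conj_mul]
      push_cast
      ring
    rw [inner_smul_right, hcr, ofReal_re]
  have hsq : ‖u + c • A y‖ ^ 2 + (‖c‖ * ‖A‖) ^ 2 = ‖u‖ ^ 2 - ‖r‖ ^ 2 / K := by
    rw [norm_add_sq (𝕜 := 𝕜), hcross, norm_smul, hc]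
    field_simp
    ring
  refine ⟨c, (norm_rankOne_add_smul_le u hy A c).trans_lt ?_⟩
  rw [norm_rankOne, hy, mul_one, hsq, Real.sqrt_lt' hu]
  have : 0 < ‖r‖ ^ 2 / K := by have := norm_pos_iff.2 h; positivity
  linarith

theorem norm_sum_smul_rankOne_le {ι : Type*} [Fintype ι] {X : ι → F} {Y : ι → E}
    (hX : Orthonormal 𝕜 X) (hY : Orthonormal 𝕜 Y) (σ : ι → 𝕜) {M : ℝ} (hM : 0 ≤ M)
    (hσ : ∀ i, ‖σ i‖ ≤ M) : ‖∑ i, σ i • rankOne 𝕜 (X i) (Y i)‖ ≤ M := by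
  refine ContinuousLinearMap.opNorm_le_bound _ hM fun w => ?_
  have hsq : ‖∑ i, (σ i * ⟪Y i, w⟫) • X i‖ ^ 2 ≤ (M * ‖w‖) ^ 2 := by
    calc ‖∑ i, (σ i * ⟪Y i, w⟫) • X i‖ ^ 2 = ∑ i, ‖σ i‖ ^ 2 * ‖⟪Y i, w⟫‖ ^ 2 := by
          simpa [mul_pow] using hX.orthogonalFamily.norm_sum (fun i => σ i * ⟪Y i, w⟫) .univ
      _ ≤ ∑ i, M ^ 2 * ‖⟪Y i, w⟫‖ ^ 2 := by
          gcongr with i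
          exact hσ i
      _ ≤ (M * ‖w‖) ^ 2 := by
          rw [← Finset.mul_sum, mul_pow]
          exact mul_le_mul_of_nonneg_left (Orthonormal.sum_inner_products_le w hY) (sq_nonneg M)
  have happly : (∑ i, σ i • rankOne 𝕜 (X i) (Y i)) w = ∑ i, (σ i * ⟪Y i, w⟫) • X i := by
    simp [smul_smul]
  rw [happly]
  exact (sq_le_sq₀ (norm_nonneg _) (by positivity)).1 hsq

theorem sum_smul_rankOne_apply_of_orthonormal {ι : Type*} [Fintype ι] [DecidableEq ι]
    (X : ι → F) {Y : ι → E} (hY : Orthonormal 𝕜 Y) (σ : ι → 𝕜) (j : ι) :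
    (∑ i, σ i • rankOne 𝕜 (X i) (Y i)) (Y j) = σ j • X j := by
  simp [orthonormal_iff_ite.1 hY]

end OperatorNorm

section Matrix

variable {𝕜 m : Type*} [RCLike 𝕜] [Fintype m]

theorem Matrix.toEuclideanCLM_vecMulVec [DecidableEq m] (u w : m → 𝕜) :
    toEuclideanCLM (𝕜 := 𝕜) (vecMulVec u (star w)) =
      rankOne 𝕜 (WithLp.toLp 2 u) (WithLp.toLp 2 w) := by
  ext ⟨z⟩ : 1
  simp [vecMulVec_mulVec, EuclideanSpace.inner_toLp_toLp, dotProduct_comm]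

theorem orthonormal_toLp_of_dotProduct {ι : Type*} [DecidableEq ι] {x : ι → m → 𝕜}
    (hx : ∀ i j, star (x i) ⬝ᵥ x j = if i = j then 1 else 0) :
    Orthonormal 𝕜 fun i => WithLp.toLp 2 (x i) :=
  orthonormal_iff_ite.2 fun i j => by
    rw [EuclideanSpace.inner_toLp_toLp, dotProduct_comm, hx]

theorem Matrix.toEuclideanCLM_sum_smul_vecMulVec [DecidableEq m] {ι : Type*} [Fintype ι]
    (σ : ι → 𝕜) (x y : ι → m → 𝕜) :
    toEuclideanCLM (𝕜 := 𝕜) (∑ i, σ i • vecMulVec (x i) (star (y i))) =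
      ∑ i, σ i • rankOne 𝕜 (WithLp.toLp 2 (x i)) (WithLp.toLp 2 (y i)) := by
  simp only [map_sum, map_smul, toEuclideanCLM_vecMulVec]

end Matrix

theorem Matrix.rank_sum_smul_vecMulVec_le_one {R m n ι : Type*} [CommRing R]
    [StrongRankCondition R] [Fintype m] [Fintype n] [Fintype ι] {σ : ι → R} {i₀ : ι}
    (hσ : ∀ i ≠ i₀, σ i = 0) (x : ι → m → R) (y : ι → n → R) :
    (∑ i, σ i • vecMulVec (x i) (y i)).rank ≤ 1 := by
  rw [Finset.sum_eq_single i₀ (fun i _ hi => by rw [hσ i hi, zero_smul]) (by simp),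
    ← smul_vecMulVec]
  exact rank_vecMulVec_le _ _

theorem bj_iff_norm_le_norm_add_smul {n : ℕ} (A B : Matrix (Fin n) (Fin n) ℂ) :
    BJ A B ↔ ∀ c : ℂ, ‖toEuclideanCLM (𝕜 := ℂ) A‖ ≤
      ‖toEuclideanCLM (𝕜 := ℂ) A + c • toEuclideanCLM (𝕜 := ℂ) B‖ := by
  simp [BJ, opNorm]

/-- Given an SVD `A = Σ σᵢ xᵢ yᵢ*` with `rk A ≥ 2` and a vector `v` not orthogonal to
`x₂`, the matrix `B = v y₂*` satisfies `A ⊥ B` but not `B ⊥ A`. -/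
theorem stmt11 {n : ℕ} (hn : 2 ≤ n) (σ : Fin n → ℝ) (x y : Fin n → Fin n → ℂ)
    (hx : ∀ i j, dotProduct (star (x i)) (x j) = if i = j then 1 else 0)
    (hy : ∀ i j, dotProduct (star (y i)) (y j) = if i = j then 1 else 0)
    (hmono : Antitone σ) (hpos : ∀ i, 0 ≤ σ i)
    (A : Matrix (Fin n) (Fin n) ℂ)
    (hA : A = ∑ i, (σ i : ℂ) • Matrix.vecMulVec (x i) (star (y i)))
    (hrk : 2 ≤ A.rank)
    (v : Fin n → ℂ)
    (hv : dotProduct (star (x ⟨1, by omega⟩)) v ≠ 0) :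
    BJ A (Matrix.vecMulVec v (star (y ⟨1, by omega⟩))) ∧
      ¬ BJ (Matrix.vecMulVec v (star (y ⟨1, by omega⟩))) A := by
  subst hA
  rw [bj_iff_norm_le_norm_add_smul, bj_iff_norm_le_norm_add_smul, toEuclideanCLM_vecMulVec,
    toEuclideanCLM_sum_smul_vecMulVec]
  set i₀ : Fin n := ⟨0, by omega⟩
  set i₁ : Fin n := ⟨1, by omega⟩
  set X := fun i => WithLp.toLp 2 (x i)
  set Y := fun i => WithLp.toLp 2 (y i)
  set T := ∑ i, (σ i : ℂ) • rankOne ℂ (X i) (Y i)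
  have hX : Orthonormal ℂ X := orthonormal_toLp_of_dotProduct hx
  have hY : Orthonormal ℂ Y := orthonormal_toLp_of_dotProduct hy
  have hTY (j : Fin n) : T (Y j) = (σ j : ℂ) • X j := sum_smul_rankOne_apply_of_orthonormal X hY _ j
  have hT : ‖T‖ ≤ σ i₀ := norm_sum_smul_rankOne_le hX hY _ (hpos i₀) fun i => by
    simpa [abs_of_nonneg (hpos i)] using hmono (Nat.zero_le i)
  have hσ₁ : σ i₁ ≠ 0 := fun h => hrk.not_gt <| Nat.lt_succ_of_le <|
    rank_sum_smul_vecMulVec_le_one (i₀ := i₀) (fun i hi => by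
      have : i₁ ≤ i := Nat.one_le_iff_ne_zero.2 fun h0 => hi (Fin.ext h0)
      exact_mod_cast le_antisymm (h ▸ hmono this) (hpos i)) _ _
  constructor
  · refine norm_le_norm_add_smul_of_inner_eq_zero (hY.1 i₀) ?_ ?_
    · rwa [hTY, norm_smul, hX.1 i₀, mul_one, Complex.norm_real, Real.norm_of_nonneg (hpos i₀)]
    · rw [rankOne_apply, hY.2 (by simp [i₀, i₁, Fin.ext_iff]), zero_smul, inner_zero_right]
  · have hvX : ⟪WithLp.toLp 2 v, X i₁⟫_ℂ = star (star (x i₁) ⬝ᵥ v) := by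
      rw [EuclideanSpace.inner_toLp_toLp, dotProduct_comm, star_dotProduct]
    push Not
    refine exists_norm_rankOne_add_smul_lt (hY.1 i₁) ?_
    rw [hTY, inner_smul_right, hvX]
    exact mul_ne_zero (Complex.ofReal_ne_zero.2 hσ₁) (star_ne_zero.2 hv)
end

section
/- Let A₁ ∈ Mₙ₁(ℂ), A₂ ∈ Mₙ₂(ℂ) with ‖A₁‖ = ‖A₂‖ ≠ 0, and suppose there are unit vectors z₁ ∈ ℂ^{n₁}, z₂ ∈ ℂ^{n₂} with z₁* A₁ z₁ = z₂* A₂ z₂ = λ ≠ 0 (a common nonzero numerical range value). Then R = z₁z₁* ⊕ (−z₂z₂*) is Birkhoff–James orthogonal to A = A₁ ⊕ A₂ in Mₙ₁(ℂ) ⊕ Mₙ₂(ℂ) with the max norm. -/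
open Matrix

/-- Birkhoff–James orthogonality on the direct sum `Mₙ₁(ℂ) ⊕ Mₙ₂(ℂ)` with the max norm. -/
def BJ2 {n₁ n₂ : ℕ} (A B : Matrix (Fin n₁) (Fin n₁) ℂ × Matrix (Fin n₂) (Fin n₂) ℂ) : Prop :=
  ∀ c : ℂ, max (opNorm A.1) (opNorm A.2) ≤
    max (opNorm (A.1 + c • B.1)) (opNorm (A.2 + c • B.2))

/-! `‖R‖ ≤ 1`, while testing `R + c A` against `z₁` and `z₂` gives the numerical
range values `c λ + 1` and `c λ - 1`, which differ by `2`, so one of them has modulus at least `1`. -/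

lemma norm_le_max_norm_add_norm_sub {E : Type*} [SeminormedAddCommGroup E] [NormedSpace ℝ E]
    (u w : E) : ‖u‖ ≤ max ‖w + u‖ ‖w - u‖ := by
  have h : 2 * ‖u‖ ≤ ‖w + u‖ + ‖w - u‖ :=
    calc 2 * ‖u‖ = ‖(w + u) - (w - u)‖ := by
          rw [add_sub_sub_cancel, ← two_smul ℝ u, norm_smul, Real.norm_two]
      _ ≤ ‖w + u‖ + ‖w - u‖ := norm_sub_le _ _
  rcases le_total ‖w + u‖ ‖w - u‖ with hle | hle
  · exact le_max_of_le_right (by linarith)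
  · exact le_max_of_le_left (by linarith)

section

variable {n : ℕ}

open WithLp

lemma opNorm_neg (A : Matrix (Fin n) (Fin n) ℂ) : opNorm (-A) = opNorm A := by
  rw [opNorm, opNorm, map_neg, norm_neg]

lemma norm_toLp_eq_one {z : Fin n → ℂ} (hz : star z ⬝ᵥ z = 1) : ‖toLp 2 z‖ = 1 := by
  rw [norm_eq_sqrt_re_inner (𝕜 := ℂ), EuclideanSpace.inner_toLp_toLp, dotProduct_comm, hz]
  simp

lemma star_dotProduct_mulVec_eq_inner (M : Matrix (Fin n) (Fin n) ℂ) (z : Fin n → ℂ) :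
    star z ⬝ᵥ M *ᵥ z = inner ℂ (toLp 2 z) (toEuclideanCLM (𝕜 := ℂ) M (toLp 2 z)) := by
  rw [toEuclideanCLM_toLp, EuclideanSpace.inner_toLp_toLp, dotProduct_comm]

lemma norm_star_dotProduct_mulVec_le_opNorm (M : Matrix (Fin n) (Fin n) ℂ) {z : Fin n → ℂ}
    (hz : star z ⬝ᵥ z = 1) : ‖star z ⬝ᵥ M *ᵥ z‖ ≤ opNorm M := by
  set x := toLp 2 z
  rw [star_dotProduct_mulVec_eq_inner]
  calc ‖inner ℂ x (toEuclideanCLM (𝕜 := ℂ) M x)‖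
      ≤ ‖x‖ * ‖toEuclideanCLM (𝕜 := ℂ) M x‖ := norm_inner_le_norm _ _
    _ ≤ ‖x‖ * (opNorm M * ‖x‖) := by gcongr; exact ContinuousLinearMap.le_opNorm _ _
    _ = opNorm M := by rw [norm_toLp_eq_one hz]; ring

lemma toEuclideanCLM_vecMulVec_star (x y : Fin n → ℂ) :
    toEuclideanCLM (𝕜 := ℂ) (vecMulVec x (star y)) =
      InnerProductSpace.rankOne ℂ (toLp 2 x) (toLp 2 y) := by
  ext v : 1
  rw [← toLp_ofLp 2 v, toEuclideanCLM_toLp, vecMulVec_mulVec, InnerProductSpace.rankOne_apply,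
    EuclideanSpace.inner_toLp_toLp, op_smul_eq_smul, toLp_smul, dotProduct_comm]

lemma opNorm_vecMulVec_star (x y : Fin n → ℂ) :
    opNorm (vecMulVec x (star y)) = ‖toLp 2 x‖ * ‖toLp 2 y‖ := by
  rw [opNorm, toEuclideanCLM_vecMulVec_star, InnerProductSpace.norm_rankOne]

lemma star_dotProduct_vecMulVec_star_self_mulVec {z : Fin n → ℂ} (hz : star z ⬝ᵥ z = 1) :
    star z ⬝ᵥ vecMulVec z (star z) *ᵥ z = 1 := by
  rw [vecMulVec_mulVec, hz, MulOpposite.op_one, one_smul, hz]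

end

theorem stmt14_general {n₁ n₂ : ℕ}
    (A₁ : Matrix (Fin n₁) (Fin n₁) ℂ) (A₂ : Matrix (Fin n₂) (Fin n₂) ℂ)
    (z₁ : Fin n₁ → ℂ) (z₂ : Fin n₂ → ℂ)
    (hz₁ : dotProduct (star z₁) z₁ = 1)
    (hz₂ : dotProduct (star z₂) z₂ = 1)
    (l : ℂ)
    (h₁ : dotProduct (star z₁) (A₁.mulVec z₁) = l)
    (h₂ : dotProduct (star z₂) (A₂.mulVec z₂) = l) :
    BJ2 (Matrix.vecMulVec z₁ (star z₁), -(Matrix.vecMulVec z₂ (star z₂))) (A₁, A₂) := by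
  intro c
  dsimp only
  have hR : max (opNorm (vecMulVec z₁ (star z₁))) (opNorm (-vecMulVec z₂ (star z₂))) ≤ 1 := by
    rw [opNorm_neg, opNorm_vecMulVec_star, opNorm_vecMulVec_star, norm_toLp_eq_one hz₁,
      norm_toLp_eq_one hz₂]
    simp
  have e₁ : star z₁ ⬝ᵥ (vecMulVec z₁ (star z₁) + c • A₁) *ᵥ z₁ = c * l + 1 := by
    rw [add_mulVec, dotProduct_add, smul_mulVec, dotProduct_smul, h₁,
      star_dotProduct_vecMulVec_star_self_mulVec hz₁, smul_eq_mul, add_comm]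
  have e₂ : star z₂ ⬝ᵥ (-vecMulVec z₂ (star z₂) + c • A₂) *ᵥ z₂ = c * l - 1 := by
    rw [add_mulVec, dotProduct_add, smul_mulVec, dotProduct_smul, h₂, neg_mulVec, dotProduct_neg,
      star_dotProduct_vecMulVec_star_self_mulVec hz₂, smul_eq_mul, neg_add_eq_sub]
  calc _ ≤ ‖(1 : ℂ)‖ := by rwa [norm_one]
    _ ≤ max ‖c * l + 1‖ ‖c * l - 1‖ := norm_le_max_norm_add_norm_sub _ _
    _ ≤ _ := max_le_max (e₁ ▸ norm_star_dotProduct_mulVec_le_opNorm _ hz₁)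
        (e₂ ▸ norm_star_dotProduct_mulVec_le_opNorm _ hz₂)

/-- If `‖A₁‖ = ‖A₂‖ ≠ 0` and unit vectors `z₁, z₂` give the same nonzero numerical
range value `λ`, then `R = z₁z₁* ⊕ (−z₂z₂*)` is BJ-orthogonal to `A = A₁ ⊕ A₂`. -/
theorem stmt14 {n₁ n₂ : ℕ}
    (A₁ : Matrix (Fin n₁) (Fin n₁) ℂ) (A₂ : Matrix (Fin n₂) (Fin n₂) ℂ)
    (hnorm : opNorm A₁ = opNorm A₂) (hne : opNorm A₁ ≠ 0)
    (z₁ : Fin n₁ → ℂ) (z₂ : Fin n₂ → ℂ)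
    (hz₁ : dotProduct (star z₁) z₁ = 1)
    (hz₂ : dotProduct (star z₂) z₂ = 1)
    (l : ℂ) (hl : l ≠ 0)
    (h₁ : dotProduct (star z₁) (A₁.mulVec z₁) = l)
    (h₂ : dotProduct (star z₂) (A₂.mulVec z₂) = l) :
    BJ2 (Matrix.vecMulVec z₁ (star z₁), -(Matrix.vecMulVec z₂ (star z₂))) (A₁, A₂) :=
  stmt14_general A₁ A₂ z₁ z₂ hz₁ hz₂ l h₁ h₂
end

section
/- Let A = x y* + σ x'(y')* ∈ Mₙ(ℂ) where (x, x') and (y, y') are orthonormal pairs and |σ| < 1. Then the Birkhoff–James outgoing neighborhood of A equals that of x y*: for all B ∈ Mₙ(ℂ), A ⊥ B if and only if x* B y = 0. -/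
open Matrix

/-!
Let `T` be `A` acting on `ℂⁿ`. Then `T y = x`, and `T` maps `y^⊥` into `x^⊥` with norm at most
`|σ| < 1`; in particular `‖T‖ = 1`. If `x* B y = 0`, then `⟪x, (A + c B) y⟫ = 1`, so
`‖A + c B‖ ≥ 1` for every `c`. If `β = x* B y ≠ 0`, take `c = -t / β` with `t > 0` small: for a
unit vector `u` at distance `r` from the line of `y`, expanding `(A + c B) u` along `x` gives
`‖(A + c B) u‖² ≤ (1 - r²)(1 - 2t) + |σ|² r² + O(t r + t²)`, and the gap `1 - |σ|²` in front of
`r²` absorbs the cross term, so this is at most `1 - t` uniformly in `u`.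
-/

open RCLike
open scoped InnerProductSpace ComplexConjugate

theorem exists_pos_forall_quadratic_le {s μ : ℝ} (hs : s ^ 2 < 1) :
    ∃ t > 0, ∀ r : ℝ,
      (1 - r ^ 2) * (1 - 2 * t) + s ^ 2 * r ^ 2 + 4 * (t * μ) * r + (t * μ) ^ 2 ≤ 1 - t := by
  set δ := 1 - s ^ 2
  have hδ : 0 < δ := sub_pos.2 hs
  set K := 8 * μ ^ 2 / δ + μ ^ 2
  have hK : 0 ≤ K := by positivity
  have hD : 0 < 4 + δ * K := by positivity
  -- `4 t ≤ δ` lets `δ r² / 2` absorb `2 t r²`, and `t K ≤ 1` lets `t` absorb the `t²` terms.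
  set t := δ / (4 + δ * K)
  have ht : 0 < t := by positivity
  have htδ : 4 * t ≤ δ := by
    rw [← mul_div_assoc, div_le_iff₀ hD]; nlinarith [mul_nonneg (mul_nonneg hδ.le hδ.le) hK]
  have htK : t * K ≤ 1 := by
    rw [div_mul_eq_mul_div, div_le_iff₀ hD]; linarith
  refine ⟨t, ht, fun r => ?_⟩
  have hamgm : 4 * (t * μ) * r ≤ δ / 2 * r ^ 2 + 8 * (t * μ) ^ 2 / δ := by
    have h := div_nonneg (sq_nonneg (δ / 2 * r - 2 * (t * μ))) hδ.le
    have hsq : δ / 2 * r ^ 2 + 8 * (t * μ) ^ 2 / δ - 4 * (t * μ) * r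
        = 2 * ((δ / 2 * r - 2 * (t * μ)) ^ 2 / δ) := by field_simp; ring
    linarith
  have hexpand : t * (t * K) = 8 * (t * μ) ^ 2 / δ + (t * μ) ^ 2 := by simp only [K]; ring
  nlinarith [sq_nonneg r]

section
variable {𝕜 F : Type*} [RCLike 𝕜] [NormedAddCommGroup F] [InnerProductSpace 𝕜 F]

theorem inner_sub_inner_smul_self_eq_zero {Y : F} (hY : ‖Y‖ = 1) (u : F) :
    ⟪Y, u - ⟪Y, u⟫_𝕜 • Y⟫_𝕜 = 0 := by
  rw [inner_sub_right, inner_smul_right, inner_self_eq_one_of_norm_eq_one hY, mul_one, sub_self]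

theorem norm_smul_add_sq {X : F} (hX : ‖X‖ = 1) (a : 𝕜) (z : F) :
    ‖a • X + z‖ ^ 2 = ‖a‖ ^ 2 + 2 * re (conj a * ⟪X, z⟫_𝕜) + ‖z‖ ^ 2 := by
  rw [norm_add_sq (𝕜 := 𝕜), inner_smul_left, norm_smul, hX, mul_one]

/-- For `s < 1`: `T` has norm `1`, attained only on the multiples of `Y`, and `T Y = X`. -/
structure IsTopSingularPair (T : F →L[𝕜] F) (Y X : F) (s : ℝ) : Prop where
  norm_left : ‖Y‖ = 1
  norm_right : ‖X‖ = 1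
  apply_eq : T Y = X
  inner_apply_eq_zero : ∀ w, ⟪Y, w⟫_𝕜 = 0 → ⟪X, T w⟫_𝕜 = 0
  norm_apply_le : ∀ w, ⟪Y, w⟫_𝕜 = 0 → ‖T w‖ ≤ s * ‖w‖

namespace IsTopSingularPair

variable {T : F →L[𝕜] F} {Y X : F} {s : ℝ}

theorem norm_add_apply_sq_le (h : IsTopSingularPair T Y X s) (hs : s ≤ 1)
    {R : F →L[𝕜] F} {t : ℝ} (hRY : ⟪X, R Y⟫_𝕜 = -t) {u : F} (hu : ‖u‖ = 1) :
    ‖(T + R) u‖ ^ 2 ≤ (1 - ‖u - ⟪Y, u⟫_𝕜 • Y‖ ^ 2) * (1 - 2 * t)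
      + s ^ 2 * ‖u - ⟪Y, u⟫_𝕜 • Y‖ ^ 2 + 4 * ‖R‖ * ‖u - ⟪Y, u⟫_𝕜 • Y‖ + ‖R‖ ^ 2 := by
  set a := ⟪Y, u⟫_𝕜
  set w := u - a • Y
  set r := ‖w‖
  set m := ‖R‖
  have hYw : ⟪Y, w⟫_𝕜 = 0 := inner_sub_inner_smul_self_eq_zero h.norm_left u
  have hu_eq : u = a • Y + w := (add_sub_cancel _ _).symm
  have ha : ‖a‖ ^ 2 = 1 - r ^ 2 := by
    have := norm_smul_add_sq h.norm_left a w
    rw [← hu_eq, hu, hYw, mul_zero, map_zero, mul_zero, add_zero] at this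
    linarith
  have happly : (T + R) u = a • X + (T w + R u) := by
    change T u + R u = _
    nth_rw 1 [hu_eq]
    rw [map_add, map_smul, h.apply_eq, add_assoc]
  have hcross : re (conj a * ⟪X, T w + R u⟫_𝕜) ≤ -t * (1 - r ^ 2) + m * r := by
    have hXRu : ⟪X, T w + R u⟫_𝕜 = -t * a + ⟪X, R w⟫_𝕜 := by
      rw [inner_add_right, h.inner_apply_eq_zero w hYw, zero_add, hu_eq, map_add, map_smul,
        inner_add_right, inner_smul_right, hRY, mul_comm]
    have ha1 : ‖a‖ ≤ 1 := by
      simpa [h.norm_left, hu] using norm_inner_le_norm (𝕜 := 𝕜) Y u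
    have hRw : re (conj a * ⟪X, R w⟫_𝕜) ≤ m * r := calc
      _ ≤ ‖a‖ * (‖X‖ * ‖R w‖) := (re_le_norm _).trans <| by
        rw [norm_mul, norm_conj]; gcongr; exact norm_inner_le_norm _ _
      _ ≤ 1 * (1 * (m * r)) := by
        rw [h.norm_right]; gcongr; exact R.le_opNorm w
      _ = m * r := by ring
    rw [hXRu, mul_add, map_add, ← mul_assoc, mul_comm _ (-(t : 𝕜)), mul_assoc, RCLike.conj_mul,
      ← ha, ← ofReal_neg, ← ofReal_pow, ← ofReal_mul, ofReal_re]
    linarith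
  have hz : ‖T w + R u‖ ≤ s * r + m :=
    norm_add_le_of_le (h.norm_apply_le w hYw) (by simpa [hu] using R.le_opNorm u)
  have hz2 : ‖T w + R u‖ ^ 2 ≤ s ^ 2 * r ^ 2 + 2 * r * m + m ^ 2 := by
    have := pow_le_pow_left₀ (norm_nonneg _) hz 2
    nlinarith [mul_nonneg (mul_nonneg (sub_nonneg.2 hs) (norm_nonneg w)) (norm_nonneg R)]
  rw [happly, norm_smul_add_sq h.norm_right, ha]
  linarith

theorem exists_norm_add_smul_lt_one (h : IsTopSingularPair T Y X s) (hs₀ : 0 ≤ s) (hs₁ : s < 1)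
    {S : F →L[𝕜] F} (hS : ⟪X, S Y⟫_𝕜 ≠ 0) : ∃ c : 𝕜, ‖T + c • S‖ < 1 := by
  set β := ⟪X, S Y⟫_𝕜
  obtain ⟨t, ht, hquad⟩ := exists_pos_forall_quadratic_le (μ := ‖S‖ / ‖β‖) (s := s) (by nlinarith)
  set c : 𝕜 := -t / β
  have hcS : ⟪X, (c • S) Y⟫_𝕜 = -t := by
    change ⟪X, c • S Y⟫_𝕜 = _
    rw [inner_smul_right, div_mul_cancel₀ _ hS]
  have hnorm : ‖c • S‖ = t * (‖S‖ / ‖β‖) := by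
    rw [norm_smul, norm_div, norm_neg, norm_ofReal, abs_of_pos ht]; ring
  refine ⟨c, ?_⟩
  calc ‖T + c • S‖ ≤ √(1 - t) :=
        ContinuousLinearMap.opNorm_le_of_unit_norm (Real.sqrt_nonneg _) fun u hu =>
          Real.le_sqrt_of_sq_le <| (h.norm_add_apply_sq_le hs₁.le hcS hu).trans <| hnorm ▸ hquad _
    _ < 1 := by rw [Real.sqrt_lt' one_pos]; linarith

theorem norm_eq_one (h : IsTopSingularPair T Y X s) (hs₀ : 0 ≤ s) (hs₁ : s ≤ 1) : ‖T‖ = 1 := by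
  refine le_antisymm (ContinuousLinearMap.opNorm_le_of_unit_norm zero_le_one fun u hu => ?_) ?_
  · have hT := h.norm_add_apply_sq_le hs₁ (R := 0) (t := 0) (by simp) hu
    rw [add_zero, norm_zero] at hT
    have hs : s ^ 2 ≤ 1 := pow_le_one₀ hs₀ hs₁
    refine (pow_le_one_iff_of_nonneg (norm_nonneg _) two_ne_zero).1 (hT.trans ?_)
    nlinarith [sq_nonneg ‖u - ⟪Y, u⟫_𝕜 • Y‖]
  · simpa [h.apply_eq, h.norm_left, h.norm_right] using T.le_opNorm Y

theorem forall_norm_le_norm_add_smul_iff (h : IsTopSingularPair T Y X s) (hs₀ : 0 ≤ s)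
    (hs₁ : s < 1) (S : F →L[𝕜] F) : (∀ c : 𝕜, ‖T‖ ≤ ‖T + c • S‖) ↔ ⟪X, S Y⟫_𝕜 = 0 := by
  have hT := h.norm_eq_one hs₀ hs₁.le
  refine ⟨fun hBJ => by_contra fun hS => ?_, fun hS c => ?_⟩
  · obtain ⟨c, hc⟩ := h.exists_norm_add_smul_lt_one hs₀ hs₁ hS
    exact (hBJ c).not_gt (hT ▸ hc)
  · have hXY : ⟪X, (T + c • S) Y⟫_𝕜 = 1 := by
      change ⟪X, T Y + c • S Y⟫_𝕜 = 1
      rw [inner_add_right, inner_smul_right, hS, mul_zero, add_zero, h.apply_eq,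
        inner_self_eq_one_of_norm_eq_one h.norm_right]
    calc ‖T‖ = ‖⟪X, (T + c • S) Y⟫_𝕜‖ := by rw [hXY, norm_one, hT]
      _ ≤ ‖X‖ * ‖(T + c • S) Y‖ := norm_inner_le_norm _ _
      _ ≤ ‖T + c • S‖ := by simpa [h.norm_left, h.norm_right] using (T + c • S).le_opNorm Y

end IsTopSingularPair

theorem isTopSingularPair_of_apply_eq {X X' Y Y' : F} (hX : ‖X‖ = 1) (hX' : ‖X'‖ = 1)
    (hXX' : ⟪X, X'⟫_𝕜 = 0) (hY : ‖Y‖ = 1) (hY' : ‖Y'‖ = 1) (hYY' : ⟪Y, Y'⟫_𝕜 = 0) {σ : 𝕜}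
    {T : F →L[𝕜] F} (hT : ∀ u, T u = ⟪Y, u⟫_𝕜 • X + (σ * ⟪Y', u⟫_𝕜) • X') :
    IsTopSingularPair T Y X ‖σ‖ where
  norm_left := hY
  norm_right := hX
  apply_eq := by
    rw [hT, inner_self_eq_one_of_norm_eq_one hY, inner_eq_zero_symm.1 hYY']; simp
  inner_apply_eq_zero w hw := by
    simp [hT, hw, inner_smul_right, hXX']
  norm_apply_le w hw := by
    rw [hT, hw, zero_smul, zero_add, norm_smul, norm_mul, hX', mul_one]
    gcongr
    simpa [hY'] using norm_inner_le_norm (𝕜 := 𝕜) Y' w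

end

section
variable {𝕜 ι : Type*} [RCLike 𝕜] [Fintype ι]

theorem inner_toLp_toLp_eq_star_dotProduct (x y : ι → 𝕜) :
    ⟪WithLp.toLp 2 x, WithLp.toLp 2 y⟫_𝕜 = star x ⬝ᵥ y := by
  rw [EuclideanSpace.inner_toLp_toLp, dotProduct_comm]

theorem norm_toLp_eq_one_s15 {x : ι → 𝕜} (hx : star x ⬝ᵥ x = 1) : ‖WithLp.toLp 2 x‖ = 1 := by
  rw [norm_eq_sqrt_re_inner (𝕜 := 𝕜), inner_toLp_toLp_eq_star_dotProduct, hx, one_re,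
    Real.sqrt_one]

theorem toEuclideanCLM_vecMulVec_star_apply [DecidableEq ι] (x y : ι → 𝕜)
    (u : EuclideanSpace 𝕜 ι) :
    toEuclideanCLM (𝕜 := 𝕜) (n := ι) (vecMulVec x (star y)) u =
      ⟪WithLp.toLp 2 y, u⟫_𝕜 • WithLp.toLp 2 x := by
  obtain ⟨v⟩ := u
  rw [toEuclideanCLM_toLp, vecMulVec_mulVec, op_smul_eq_smul, inner_toLp_toLp_eq_star_dotProduct,
    WithLp.toLp_smul]

end

/-- For `A = x y* + σ x'(y')*` with orthonormal pairs and `|σ| < 1`, the outgoing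
BJ-neighbourhood of `A` equals that of `x y*`: `A ⊥ B ↔ x* B y = 0`. -/
theorem stmt15 {n : ℕ} (x x' y y' : Fin n → ℂ)
    (hx : dotProduct (star x) x = 1)
    (hx' : dotProduct (star x') x' = 1)
    (hxx' : dotProduct (star x) x' = 0)
    (hy : dotProduct (star y) y = 1)
    (hy' : dotProduct (star y') y' = 1)
    (hyy' : dotProduct (star y) y' = 0)
    (σ : ℂ) (hσ : ‖σ‖ < 1)
    (A : Matrix (Fin n) (Fin n) ℂ)
    (hA : A = Matrix.vecMulVec x (star y) + σ • Matrix.vecMulVec x' (star y')) :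
    ∀ B : Matrix (Fin n) (Fin n) ℂ,
      BJ A B ↔ dotProduct (star x) (B.mulVec y) = 0 := by
  intro B
  have hT : IsTopSingularPair (toEuclideanCLM (𝕜 := ℂ) (n := Fin n) A)
      (WithLp.toLp 2 y) (WithLp.toLp 2 x) ‖σ‖ :=
    isTopSingularPair_of_apply_eq (norm_toLp_eq_one_s15 hx) (norm_toLp_eq_one_s15 hx')
      (by rwa [inner_toLp_toLp_eq_star_dotProduct]) (norm_toLp_eq_one_s15 hy) (norm_toLp_eq_one_s15 hy')
      (by rwa [inner_toLp_toLp_eq_star_dotProduct]) fun u => by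
        rw [hA, map_add, map_smul, _root_.add_apply, _root_.smul_apply,
          toEuclideanCLM_vecMulVec_star_apply, toEuclideanCLM_vecMulVec_star_apply, smul_smul]
  simp only [BJ, opNorm, map_add, map_smul]
  rw [hT.forall_norm_le_norm_add_smul_iff (norm_nonneg σ) hσ, toEuclideanCLM_toLp,
    inner_toLp_toLp_eq_star_dotProduct]
end
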